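/- arXiv:0712.2476 — 7 statements merged into one kernel-verified Lean document; each statement's English description precedes it below -/
import Mathlib

section
/- If C ⊆ V is convex and S ⊊ C is an extremal subset of C, then S does not meet the relative interior of C, i.e., S ∩ ri(C) = ∅. -/
/-!
Extend the segment from a point `x ∈ C` through a relative interior point `s` slightly beyond `s`:
since `s` is interior to `C` within its affine span, the extension stays in `C` for a short while.
Then `s` lies in the open segment between `x` and the new endpoint, so extremality of `S` drags
every `x ∈ C` into `S` as soon as `S` contains `s`.
-/

open AffineMap Filter Topology

section

variable {V : Type*} [AddCommGroup V] [Module ℝ V] [TopologicalSpace V]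
  [IsTopologicalAddGroup V] [ContinuousSMul ℝ V] {C S : Set V} {s x : V}

theorem exists_lineMap_mem_of_mem_intrinsicInterior (hs : s ∈ intrinsicInterior ℝ C)
    (hx : x ∈ C) : ∃ t : ℝ, 1 < t ∧ lineMap x s t ∈ C := by
  obtain ⟨z, hz, rfl⟩ := mem_intrinsicInterior.mp hs
  let f : ℝ → affineSpan ℝ C := fun t ↦
    ⟨lineMap x z t, lineMap_mem t (subset_affineSpan ℝ C hx) z.2⟩
  have hf : Continuous f := lineMap_continuous.subtype_mk _
  have hf1 : f 1 = z := Subtype.ext (lineMap_apply_one _ _)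
  have hnear : ∀ᶠ t in 𝓝[>] (1 : ℝ), f t ∈ interior ((↑) ⁻¹' C) :=
    nhdsWithin_le_nhds <| hf.continuousAt.preimage_mem_nhds (hf1 ▸ isOpen_interior.mem_nhds hz)
  obtain ⟨t, ht, ht1⟩ := (hnear.and self_mem_nhdsWithin).exists
  exact ⟨t, ht1, (interior_subset ht : f t ∈ (↑) ⁻¹' C)⟩

theorem exists_mem_openSegment_of_mem_intrinsicInterior (hs : s ∈ intrinsicInterior ℝ C)
    (hx : x ∈ C) : ∃ y ∈ C, s ∈ openSegment ℝ x y := by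
  obtain ⟨t, ht, hyC⟩ := exists_lineMap_mem_of_mem_intrinsicInterior hs hx
  refine ⟨lineMap x s t, hyC, ?_⟩
  rw [openSegment_eq_image_lineMap]
  refine ⟨t⁻¹, ⟨by positivity, inv_lt_one_of_one_lt₀ ht⟩, ?_⟩
  rw [lineMap_lineMap_right, inv_mul_cancel₀ (by positivity), lineMap_apply_one]

theorem IsExtreme.eq_of_mem_intrinsicInterior (h : IsExtreme ℝ C S) (hsS : s ∈ S)
    (hs : s ∈ intrinsicInterior ℝ C) : S = C := by
  refine h.subset.antisymm fun x hx ↦ ?_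
  obtain ⟨y, hy, hsxy⟩ := exists_mem_openSegment_of_mem_intrinsicInterior hs hx
  exact h.left_mem_of_mem_openSegment hx hy hsS hsxy

theorem IsExtreme.inter_intrinsicInterior_eq_empty (h : IsExtreme ℝ C S) (hne : S ≠ C) :
    S ∩ intrinsicInterior ℝ C = ∅ :=
  Set.eq_empty_iff_forall_notMem.mpr fun _ ⟨hsS, hs⟩ ↦ hne (h.eq_of_mem_intrinsicInterior hsS hs)

end

theorem isExtreme_of_forall_smul_add_smul_mem {V : Type*} [AddCommGroup V] [Module ℝ V]
    {C S : Set V} (hS : S ⊆ C)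
    (hext : ∀ x ∈ C, ∀ y ∈ C, ∀ t ∈ Set.Ioo (0:ℝ) 1, t • x + (1 - t) • y ∈ S → x ∈ S ∧ y ∈ S) :
    IsExtreme ℝ C S := by
  refine ⟨hS, fun x hx y hy z hz ⟨a, b, ha, _, hab, hxyz⟩ ↦ ?_⟩
  obtain rfl : b = 1 - a := by linarith
  exact (hext x hx y hy a ⟨ha, by linarith⟩ (hxyz ▸ hz)).1

theorem stmt4_general {V : Type*} [NormedAddCommGroup V] [NormedSpace ℝ V]
    (C S : Set V) (hS : S ⊆ C)
    (hne : S ≠ C)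
    (hext : ∀ x ∈ C, ∀ y ∈ C, ∀ t ∈ Set.Ioo (0:ℝ) 1,
      t • x + (1 - t) • y ∈ S → x ∈ S ∧ y ∈ S) :
    S ∩ intrinsicInterior ℝ C = ∅ :=
  (isExtreme_of_forall_smul_add_smul_mem hS hext).inter_intrinsicInterior_eq_empty hne

/-- A proper extremal subset of a convex set misses the relative interior. -/
theorem stmt4 {V : Type*} [NormedAddCommGroup V] [NormedSpace ℝ V]
    [FiniteDimensional ℝ V] (C S : Set V) (hC : Convex ℝ C) (hS : S ⊆ C)
    (hne : S ≠ C)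
    (hext : ∀ x ∈ C, ∀ y ∈ C, ∀ t ∈ Set.Ioo (0:ℝ) 1,
      t • x + (1 - t) • y ∈ S → x ∈ S ∧ y ∈ S) :
    S ∩ intrinsicInterior ℝ C = ∅ :=
  stmt4_general C S hS hne hext
end

section
/- Let X ⊆ M(m,n,ℝ) be a convex set of matrices and for each unit vector v ∈ ℝⁿ let Σ_v(X) = {A ∈ X : A v = 0}. Then the following are equivalent: (1) for every unit vector v, the set Σ_v(X) is semi-extremal in X (i.e., X \ Σ_v(X) is convex); (2) for any A, B ∈ X, ker(A + B) ⊆ ker A. -/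
/-- Characterization of semi-extremality of the kernel slices Σ_v(X). -/
theorem stmt8 (m n : ℕ) (X : Set (Matrix (Fin m) (Fin n) ℝ)) (hX : Convex ℝ X) :
    (∀ v : EuclideanSpace ℝ (Fin n), ‖v‖ = 1 →
        Convex ℝ (X \ {A ∈ X | A.mulVec (fun i => v i) = 0}))
    ↔
    (∀ A ∈ X, ∀ B ∈ X, ∀ u : Fin n → ℝ,
        (A + B).mulVec u = 0 → A.mulVec u = 0) := by
  constructor
  · intro h A hA B hB u hu
    by_cases hu0 : u = 0
    · simp [hu0]
    by_contra hAu
    -- normalize u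
    set w : EuclideanSpace ℝ (Fin n) := (WithLp.equiv 2 (Fin n → ℝ)).symm u with hw
    have hw0 : w ≠ 0 := by
      simpa [hw] using hu0
    set v : EuclideanSpace ℝ (Fin n) := ‖w‖⁻¹ • w with hv
    have hvn : ‖v‖ = 1 := norm_smul_inv_norm hw0
    have hc : ‖w‖⁻¹ ≠ 0 := inv_ne_zero (norm_ne_zero_iff.mpr hw0)
    have hvev : (fun i => v i) = ‖w‖⁻¹ • u := by
      funext i; rfl
    have hAv : A.mulVec (fun i => v i) ≠ 0 := by
      rw [hvev, Matrix.mulVec_smul]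
      exact smul_ne_zero hc hAu
    have hBu : B.mulVec u ≠ 0 := by
      intro hB0
      apply hAu
      have := hu
      rw [Matrix.add_mulVec, hB0, add_zero] at this
      exact this
    have hBv : B.mulVec (fun i => v i) ≠ 0 := by
      rw [hvev, Matrix.mulVec_smul]
      exact smul_ne_zero hc hBu
    have hconv := h v hvn
    have hmid := hconv (x := A) (y := B) ⟨hA, fun hmem => hAv hmem.2⟩
      ⟨hB, fun hmem => hBv hmem.2⟩ (by norm_num : (0:ℝ) ≤ 1/2)
      (by norm_num : (0:ℝ) ≤ 1/2) (by norm_num)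
    apply hmid.2
    refine ⟨hmid.1, ?_⟩
    rw [hvev]
    have : ((1/2 : ℝ) • A + (1/2 : ℝ) • B).mulVec u = (1/2 : ℝ) • (A + B).mulVec u := by
      simp [Matrix.add_mulVec, Matrix.smul_mulVec, smul_add]
    rw [Matrix.mulVec_smul, this, hu]
    simp
  · intro h v hv
    intro A hA B hB a b ha hb hab
    set w : Fin n → ℝ := fun i => v i with hwdef
    have hAw : A.mulVec w ≠ 0 := fun h0 => hA.2 ⟨hA.1, h0⟩
    have hBw : B.mulVec w ≠ 0 := fun h0 => hB.2 ⟨hB.1, h0⟩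
    have hCX : a • A + b • B ∈ X := hX hA.1 hB.1 ha hb hab
    refine ⟨hCX, fun hmem => ?_⟩
    have hC0 : (a • A + b • B).mulVec w = 0 := hmem.2
    have hC0' : a • A.mulVec w + b • B.mulVec w = 0 := by
      simpa [Matrix.add_mulVec, Matrix.smul_mulVec] using hC0
    rcases ha.eq_or_lt with ha0 | ha0
    · apply hBw
      have hb1 : b = 1 := by linarith
      simpa [← ha0, hb1] using hC0'
    rcases hb.eq_or_lt with hb0 | hb0
    · apply hAw
      have ha1 : a = 1 := by linarith
      simpa [← hb0, ha1] using hC0'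
    -- a, b > 0
    set t : ℝ := min a b with ht
    have ht0 : 0 < t := lt_min ha0 hb0
    have hta : t ≤ a := min_le_left a b
    have htb : t ≤ b := min_le_right a b
    have hPX : (a + t) • A + (b - t) • B ∈ X :=
      hX hA.1 hB.1 (by linarith) (by linarith) (by linarith)
    have hQX : (a - t) • A + (b + t) • B ∈ X :=
      hX hA.1 hB.1 (by linarith) (by linarith) (by linarith)
    have hsum : (((a + t) • A + (b - t) • B) + ((a - t) • A + (b + t) • B)).mulVec w = 0 := by
      have : ((a + t) • A + (b - t) • B) + ((a - t) • A + (b + t) • B)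
          = (2*a) • A + (2*b) • B := by
        module
      rw [this]
      have : ((2*a) • A + (2*b) • B).mulVec w
          = (2:ℝ) • ((a • A + b • B).mulVec w) := by
        simp [Matrix.add_mulVec, Matrix.smul_mulVec, smul_smul, smul_add,
          two_mul, mul_comm]
      rw [this, hC0]
      simp
    have hP0 := h _ hPX _ hQX w hsum
    have hP0' : (a + t) • A.mulVec w + (b - t) • B.mulVec w = 0 := by
      simpa [Matrix.add_mulVec, Matrix.smul_mulVec] using hP0
    -- subtract hC0' to get t • (Aw - Bw) = 0
    have hdiff : t • (A.mulVec w - B.mulVec w) = 0 := by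
      have := sub_eq_zero.mpr (hP0'.trans hC0'.symm)
      rw [← this]
      module
    have hAB : A.mulVec w = B.mulVec w := by
      have := smul_eq_zero.mp hdiff
      rcases this with h' | h'
      · exact absurd h' ht0.ne'
      · exact sub_eq_zero.mp h'
    apply hAw
    have : a • A.mulVec w + b • A.mulVec w = 0 := by rw [hAB] at hC0' ⊢; exact hC0'
    have h1 : (a + b) • A.mulVec w = 0 := by rw [add_smul]; exact this
    rwa [hab, one_smul] at h1
end

section
/- For a convex set X of m×n real matrices, if Σ_v(X) = {A ∈ X : Av = 0} is semi-extremal in X for some unit vector v, then φ(X) ∩ (−φ(X)) ⊆ {0}, where φ(A) = Av. -/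
/-- If Σ_v(X) is semi-extremal in X then φ(X) ∩ (−φ(X)) ⊆ {0}, where φ(A)=Av. -/
theorem stmt9 (m n : ℕ) (X : Set (Matrix (Fin m) (Fin n) ℝ)) (hX : Convex ℝ X)
    (v : EuclideanSpace ℝ (Fin n)) (hv : ‖v‖ = 1)
    (hsemi : Convex ℝ (X \ {A ∈ X | A.mulVec (fun i => v i) = 0})) :
    ((fun A : Matrix (Fin m) (Fin n) ℝ => A.mulVec (fun i => v i)) '' X) ∩
      (-((fun A : Matrix (Fin m) (Fin n) ℝ => A.mulVec (fun i => v i)) '' X))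
      ⊆ {0} := by
  rintro y ⟨⟨A, hA, hAy⟩, hy2⟩
  rw [Set.mem_neg] at hy2
  obtain ⟨B, hB, hBy⟩ := hy2
  have hAy : A.mulVec (fun i => v i) = y := hAy
  have hBy : B.mulVec (fun i => v i) = -y := hBy
  by_contra hy
  have hyne : y ≠ 0 := hy
  have hA' : A ∈ X \ {A ∈ X | A.mulVec (fun i => v i) = 0} :=
    ⟨hA, fun h => hyne (by rw [← hAy]; exact h.2)⟩
  have hB' : B ∈ X \ {A ∈ X | A.mulVec (fun i => v i) = 0} :=
    ⟨hB, fun h => hyne (by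
      have := h.2
      rw [hBy] at this
      simpa using (neg_eq_zero.mp this))⟩
  have hmid := hsemi hA' hB' (by norm_num : (0:ℝ) ≤ 1/2) (by norm_num : (0:ℝ) ≤ 1/2)
    (by norm_num)
  apply hmid.2
  refine ⟨hmid.1, ?_⟩
  show ((1/2 : ℝ) • A + (1/2 : ℝ) • B).mulVec (fun i => v i) = 0
  rw [Matrix.add_mulVec, Matrix.smul_mulVec, Matrix.smul_mulVec, hAy, hBy]
  simp
end

section
/- Let m ≤ n and A ∈ M(m,n,ℝ) (an m×n matrix viewed as a linear map ℝᵐ → ℝⁿ, with the operator norm). Then the distance from A to the set Σ of matrices of non-maximal rank equals inf{|Av| : v ∈ Sᵐ⁻¹}. -/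
/-- Distance to the singular (non-injective) matrices equals the infimum of
|Av| over unit vectors v (for m ≤ n). -/
theorem stmt10 (m n : ℕ) (hmn : m ≤ n)
    (A : EuclideanSpace ℝ (Fin m) →L[ℝ] EuclideanSpace ℝ (Fin n)) :
    Metric.infDist A
        {B : EuclideanSpace ℝ (Fin m) →L[ℝ] EuclideanSpace ℝ (Fin n) |
          ¬ Function.Injective B} =
      sInf {r : ℝ | ∃ v : EuclideanSpace ℝ (Fin m), ‖v‖ = 1 ∧ r = ‖A v‖} := by
  rcases Nat.eq_zero_or_pos m with hm | hm
  · subst hm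
    have h1 : {B : EuclideanSpace ℝ (Fin 0) →L[ℝ] EuclideanSpace ℝ (Fin n) |
        ¬ Function.Injective B} = ∅ := by
      ext B
      simp only [Set.mem_setOf_eq, Set.mem_empty_iff_false, iff_false, not_not]
      intro x y _
      exact Subsingleton.elim x y
    have h2 : {r : ℝ | ∃ v : EuclideanSpace ℝ (Fin 0), ‖v‖ = 1 ∧ r = ‖A v‖} = ∅ := by
      ext r
      simp only [Set.mem_setOf_eq, Set.mem_empty_iff_false, iff_false]
      rintro ⟨v, hv, -⟩
      rw [Subsingleton.elim v 0, norm_zero] at hv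
      norm_num at hv
    rw [h1, h2, Metric.infDist_empty, Real.sInf_empty]
  · -- m ≥ 1
    set S := {r : ℝ | ∃ v : EuclideanSpace ℝ (Fin m), ‖v‖ = 1 ∧ r = ‖A v‖} with hS
    have u₀ : EuclideanSpace ℝ (Fin m) := EuclideanSpace.single ⟨0, hm⟩ (1 : ℝ)
    have hu₀ : ‖(EuclideanSpace.single ⟨0, hm⟩ (1 : ℝ) : EuclideanSpace ℝ (Fin m))‖ = 1 := by
      rw [EuclideanSpace.norm_single]; norm_num
    have hu₀ne : (EuclideanSpace.single ⟨0, hm⟩ (1 : ℝ) : EuclideanSpace ℝ (Fin m)) ≠ 0 := by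
      intro h; rw [h, norm_zero] at hu₀; norm_num at hu₀
    have hSne : S.Nonempty := ⟨‖A (EuclideanSpace.single ⟨0, hm⟩ (1 : ℝ))‖,
      EuclideanSpace.single ⟨0, hm⟩ (1 : ℝ), hu₀, rfl⟩
    have hSbdd : BddBelow S := ⟨0, by rintro r ⟨v, -, rfl⟩; exact norm_nonneg _⟩
    have hsigne : {B : EuclideanSpace ℝ (Fin m) →L[ℝ] EuclideanSpace ℝ (Fin n) |
        ¬ Function.Injective B}.Nonempty := by
      refine ⟨0, fun h => hu₀ne ?_⟩
      exact h (by simp)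
    apply le_antisymm
    · -- infDist ≤ sInf S
      refine le_csInf hSne ?_
      rintro r ⟨v, hv, rfl⟩
      set C : EuclideanSpace ℝ (Fin m) →L[ℝ] EuclideanSpace ℝ (Fin n) :=
        (innerSL ℝ v).smulRight (A v) with hC
      have hvne : v ≠ 0 := fun h => by rw [h, norm_zero] at hv; norm_num at hv
      have hBv : (A - C) v = 0 := by
        simp only [hC, ContinuousLinearMap.sub_apply, ContinuousLinearMap.smulRight_apply,
          innerSL_apply_apply]
        rw [real_inner_self_eq_norm_sq, hv]
        simp
      have hBmem : (A - C) ∈ {B : EuclideanSpace ℝ (Fin m) →L[ℝ] EuclideanSpace ℝ (Fin n) |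
          ¬ Function.Injective B} := by
        intro h
        exact hvne (h (by rw [hBv, map_zero]))
      calc Metric.infDist A _ ≤ dist A (A - C) := Metric.infDist_le_dist_of_mem hBmem
        _ = ‖C‖ := by rw [dist_eq_norm, sub_sub_cancel]
        _ = ‖A v‖ := by
            rw [hC, ContinuousLinearMap.norm_smulRight_apply, innerSL_apply_norm, hv, one_mul]
    · -- sInf S ≤ infDist
      by_contra hcon
      push_neg at hcon
      obtain ⟨B, hB, hlt⟩ := (Metric.infDist_lt_iff hsigne).mp hcon
      refine absurd hlt (not_lt.mpr ?_)
      simp only [Set.mem_setOf_eq, Function.Injective, not_forall] at hB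
      obtain ⟨x, y, hxy, hne⟩ := hB
      set v := x - y with hv
      have hvne : v ≠ 0 := sub_ne_zero.mpr hne
      have hBv : B v = 0 := by rw [hv, map_sub, hxy, sub_self]
      set u := ‖v‖⁻¹ • v with hu
      have hnu : ‖u‖ = 1 := norm_smul_inv_norm hvne
      have hAu : A u = (A - B) u := by
        have hBu : B u = 0 := by rw [hu, map_smul, hBv, smul_zero]
        rw [ContinuousLinearMap.sub_apply, hBu, sub_zero]
      calc sInf S ≤ ‖A u‖ := csInf_le hSbdd ⟨u, hnu, rfl⟩
        _ = ‖(A - B) u‖ := by rw [hAu]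
        _ ≤ ‖A - B‖ * ‖u‖ := (A - B).le_opNorm u
        _ = dist A B := by rw [hnu, mul_one, dist_eq_norm]
end

section
/- Let g : [a,b] → ℝⁿ (a < b) be continuous and differentiable except at finitely many points, and suppose the relative interior of the convex hull of {g'(t) : t ∈ [a,b], g differentiable at t} does not contain 0. Then there exists w ∈ ℝⁿ with ⟨w, g(a)⟩ < ⟨w, g(b)⟩; in particular g(a) ≠ g(b). -/
/-!
As `0` is not in the relative interior of the convex set `C = co(g')`, a supporting hyperplane
through `0` separates it properly: some `w` has `⟪w, v⟫ ≥ 0` on `C` and `⟪w, v⟫ > 0` somewhere on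
`C`, hence at some derivative `g' t₀` (a linear function attains its maximum over a convex hull on
the generating set). Then `t ↦ ⟪w, g t⟫` is continuous with nonnegative derivative off a finite
set, so it is monotone on `[a, b]`; it is not constant because its derivative at `t₀` is positive.
-/

open Set InnerProductSpace

section Separation

variable {E : Type*} [NormedAddCommGroup E] [InnerProductSpace ℝ E]

theorem Convex.exists_inner_nonneg_pos_of_zero_notMem_interior [CompleteSpace E] {C : Set E}
    (hC : Convex ℝ C) (hint : (interior C).Nonempty) (h0 : (0 : E) ∉ interior C) :
    ∃ w : E, (∀ x ∈ C, 0 ≤ ⟪w, x⟫_ℝ) ∧ ∃ x ∈ C, 0 < ⟪w, x⟫_ℝ := by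
  obtain ⟨f, hf⟩ := geometric_hahn_banach_open_point hC.interior isOpen_interior h0
  rw [map_zero] at hf
  have hfC : ∀ x ∈ C, f x ≤ 0 := fun x hx =>
    closure_minimal (fun y hy => (hf y hy).le) (isClosed_Iic.preimage f.continuous)
      (hC.closure_interior_eq_closure_of_nonempty_interior hint ▸ subset_closure hx)
  obtain ⟨y, hy⟩ := hint
  refine ⟨(toDual ℝ E).symm (-f), fun x hx => ?_, y, interior_subset hy, ?_⟩ <;>
    simp only [toDual_symm_apply, neg_apply, neg_nonneg, neg_pos]
  exacts [hfC x hx, hf y hy]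

theorem Convex.exists_inner_nonneg_pos_of_zero_notMem_intrinsicInterior [FiniteDimensional ℝ E]
    {C : Set E} (hC : Convex ℝ C) (hne : C.Nonempty) (h0 : (0 : E) ∉ intrinsicInterior ℝ C) :
    ∃ w : E, (∀ x ∈ C, 0 ≤ ⟪w, x⟫_ℝ) ∧ ∃ x ∈ C, 0 < ⟪w, x⟫_ℝ := by
  by_cases hA : (0 : E) ∈ affineSpan ℝ C
  · -- the affine span is then a linear subspace `V`, and the relative interior is the interior
    -- of `C` inside `V`
    set V := (affineSpan ℝ C).direction
    have hAV : (V : AffineSubspace ℝ E) = affineSpan ℝ C :=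
      AffineSubspace.direction_eq_self_iff_zero_mem.mpr hA
    have hCV : ∀ x ∈ C, x ∈ V := fun x hx => by
      rw [← Submodule.mem_toAffineSubspace, hAV]; exact subset_affineSpan ℝ C hx
    have hri : intrinsicInterior ℝ C = (↑) '' interior ((↑) ⁻¹' C : Set V) := by
      rw [intrinsicInterior, ← hAV]; rfl
    rw [hri] at h0
    have hint : (interior ((↑) ⁻¹' C : Set V)).Nonempty := by
      simpa [hri] using hne.intrinsicInterior hC
    obtain ⟨w, hw, ⟨x, _⟩, hxC, hx⟩ :=
      (hC.linear_preimage V.subtype).exists_inner_nonneg_pos_of_zero_notMem_interior hint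
        fun h => h0 ⟨0, h, rfl⟩
    exact ⟨w, fun y hy => hw ⟨y, hCV y hy⟩ hy, x, hxC, hx⟩
  · obtain ⟨f, u, hf0, hf⟩ := geometric_hahn_banach_point_closed (affineSpan ℝ C).convex
      (affineSpan ℝ C).closed_of_finiteDimensional hA
    rw [map_zero] at hf0
    have hfC : ∀ x ∈ C, 0 < f x := fun x hx => hf0.trans (hf x (subset_affineSpan ℝ C hx))
    obtain ⟨x, hx⟩ := hne
    refine ⟨(toDual ℝ E).symm f, fun y hy => ?_, x, hx, ?_⟩ <;> rw [toDual_symm_apply]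
    exacts [(hfC y hy).le, hfC x hx]

end Separation

theorem monotoneOn_Icc_of_hasDerivAt_nonneg_off_finite {F : Set ℝ} (hF : F.Finite)
    {f f' : ℝ → ℝ} {a b : ℝ} (hf : ContinuousOn f (Icc a b))
    (hf' : ∀ t ∈ Ioo a b \ F, HasDerivAt f (f' t) t) (hf'₀ : ∀ t ∈ Ioo a b \ F, 0 ≤ f' t) :
    MonotoneOn f (Icc a b) := by
  induction F, hF using Set.Finite.induction_on generalizing a b with
  | empty =>
    rw [sdiff_empty, ← interior_Icc] at hf' hf'₀
    exact monotoneOn_of_hasDerivWithinAt_nonneg (convex_Icc a b) hf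
      (fun t ht => (hf' t ht).hasDerivWithinAt) hf'₀
  | @insert c s _ _ ih =>
    by_cases hc : c ∈ Ioo a b
    · have hleft : Ioo a c \ s ⊆ Ioo a b \ insert c s := fun t ht =>
        ⟨⟨ht.1.1, ht.1.2.trans hc.2⟩, by rintro (rfl | h); exacts [ht.1.2.false, ht.2 h]⟩
      have hright : Ioo c b \ s ⊆ Ioo a b \ insert c s := fun t ht =>
        ⟨⟨hc.1.trans ht.1.1, ht.1.2⟩, by rintro (rfl | h); exacts [ht.1.1.false, ht.2 h]⟩
      have h₁ := ih (hf.mono (Icc_subset_Icc_right hc.2.le)) (fun t ht => hf' t (hleft ht))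
        (fun t ht => hf'₀ t (hleft ht))
      have h₂ := ih (hf.mono (Icc_subset_Icc_left hc.1.le)) (fun t ht => hf' t (hright ht))
        (fun t ht => hf'₀ t (hright ht))
      rw [← Icc_union_Icc_eq_Icc hc.1.le hc.2.le]
      exact h₁.union_right h₂ (isGreatest_Icc hc.1.le) (isLeast_Icc hc.2.le)
    · have hsub : Ioo a b \ s ⊆ Ioo a b \ insert c s := fun t ht =>
        ⟨ht.1, by rintro (rfl | h); exacts [hc ht.1, ht.2 h]⟩
      exact ih hf (fun t ht => hf' t (hsub ht)) (fun t ht => hf'₀ t (hsub ht))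

theorem MonotoneOn.lt_of_hasDerivWithinAt_pos {f : ℝ → ℝ} {a b t f't : ℝ} (hab : a < b)
    (hf : MonotoneOn f (Icc a b)) (ht : t ∈ Icc a b) (hderiv : HasDerivWithinAt f f't (Icc a b) t)
    (hpos : 0 < f't) : f a < f b := by
  have ha : a ∈ Icc a b := left_mem_Icc.2 hab.le
  have hb : b ∈ Icc a b := right_mem_Icc.2 hab.le
  refine (hf ha hb hab.le).lt_of_ne fun hfab => hpos.ne' ?_
  have hconst : EqOn f (fun _ => f a) (Icc a b) := fun x hx =>
    le_antisymm (hfab ▸ hf hx hb hx.2) (hf ha hx hx.1)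
  exact (uniqueDiffOn_Icc hab t ht).eq_deriv _ hderiv
    ((hasDerivWithinAt_const t _ (f a)).congr hconst (hconst ht))

/-- Key lemma: if 0 is not in the relative interior of the convex hull of the
derivatives of g, then some linear functional strictly separates g(a), g(b). -/
theorem stmt15 (n : ℕ) (a b : ℝ) (hab : a < b)
    (g g' : ℝ → EuclideanSpace ℝ (Fin n)) (F : Set ℝ) (hF : F.Finite)
    (hg : ContinuousOn g (Set.Icc a b))
    (hg' : ∀ t ∈ Set.Icc a b \ F, HasDerivWithinAt g (g' t) (Set.Icc a b) t)
    (h0 : (0 : EuclideanSpace ℝ (Fin n)) ∉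
      intrinsicInterior ℝ (convexHull ℝ (g' '' (Set.Icc a b \ F)))) :
    ∃ w : EuclideanSpace ℝ (Fin n),
      (inner ℝ w (g a) : ℝ) < (inner ℝ w (g b) : ℝ) := by
  set S := g' '' (Icc a b \ F)
  have hS : S.Nonempty := ((Icc_infinite hab).sdiff hF).nonempty.image g'
  obtain ⟨w, hw, x, hxS, hx⟩ :=
    (convex_convexHull ℝ S).exists_inner_nonneg_pos_of_zero_notMem_intrinsicInterior
      (hS.mono (subset_convexHull ℝ S)) h0
  obtain ⟨_, ⟨t₀, ht₀, rfl⟩, hxt₀⟩ :=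
    ((innerₗ _ w).convexOn (convex_convexHull ℝ S)).exists_ge_of_mem_convexHull
      (subset_convexHull ℝ S) hxS
  have hφ : ∀ t ∈ Icc a b \ F, HasDerivWithinAt (fun t => ⟪w, g t⟫_ℝ) ⟪w, g' t⟫_ℝ (Icc a b) t :=
    fun t ht => (innerSL ℝ w).hasFDerivAt.comp_hasDerivWithinAt t (hg' t ht)
  have hmono : MonotoneOn (fun t => ⟪w, g t⟫_ℝ) (Icc a b) :=
    monotoneOn_Icc_of_hasDerivAt_nonneg_off_finite hF
      ((innerSL ℝ w).continuous.comp_continuousOn hg)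
      (fun t ht => (hφ t ⟨Ioo_subset_Icc_self ht.1, ht.2⟩).hasDerivAt (Icc_mem_nhds ht.1.1 ht.1.2))
      (fun t ht => hw _ (subset_convexHull ℝ S ⟨t, ⟨Ioo_subset_Icc_self ht.1, ht.2⟩, rfl⟩))
  exact ⟨w, hmono.lt_of_hasDerivWithinAt_pos hab ht₀.1 (hφ t₀ ht₀) (hx.trans_le hxt₀)⟩
end

section
/- Global injectivity with quantitative lower bound: Let U ⊆ ℝⁿ be a convex open set and f : U → ℝⁿ continuous, differentiable outside a finite union of points on every segment (e.g., f differentiable except on a set whose intersection with every line segment is finite). Suppose there is δ > 0 such that every matrix A in the convex hull of {df(x) : x ∈ U, f differentiable at x} satisfies |Av| ≥ δ for all unit vectors v. Then |f(x') − f(x)| ≥ δ|x' − x| for all x, x' ∈ U; in particular f is injective. -/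
open Set

/-- Mean value inequality with no exceptional points: derivative bounded by `c` on the open
interval gives a slope bound. -/
lemma mvt_le_aux0 {c : ℝ} {φ : ℝ → ℝ} {a b : ℝ} (hab : a ≤ b)
    (hcont : ContinuousOn φ (Icc a b))
    (hder : ∀ t ∈ Ioo a b, ∃ d, d ≤ c ∧ HasDerivAt φ d t) :
    φ b - φ a ≤ c * (b - a) := by
  rcases eq_or_lt_of_le hab with rfl | hlt
  · simp
  · set g : ℝ → ℝ := fun t => if h : t ∈ Ioo a b then (hder t h).choose else 0 with hg
    have hgd : ∀ t ∈ Ioo a b, HasDerivAt φ (g t) t := by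
      intro t ht
      simp only [hg, dif_pos ht]
      exact (hder t ht).choose_spec.2
    have hgle : ∀ t ∈ Ioo a b, g t ≤ c := by
      intro t ht
      simp only [hg, dif_pos ht]
      exact (hder t ht).choose_spec.1
    obtain ⟨ξ, hξ, hslope⟩ := exists_hasDerivAt_eq_slope φ g hlt hcont hgd
    have hba : (0:ℝ) < b - a := by linarith
    have : (φ b - φ a) / (b - a) ≤ c := hslope ▸ hgle ξ hξ
    calc φ b - φ a = (φ b - φ a) / (b - a) * (b - a) := by field_simp
    _ ≤ c * (b - a) := by
        apply mul_le_mul_of_nonneg_right this (le_of_lt hba)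

/-- Mean value inequality allowing finitely many exceptional points. -/
lemma mvt_le_aux : ∀ (N : ℕ) (c : ℝ) (φ : ℝ → ℝ) (s : Finset ℝ) (a b : ℝ),
    s.card ≤ N → a ≤ b → ContinuousOn φ (Icc a b) →
    (∀ t ∈ Ioo a b, t ∉ s → ∃ d, d ≤ c ∧ HasDerivAt φ d t) →
    φ b - φ a ≤ c * (b - a) := by
  intro N
  induction N with
  | zero =>
    intro c φ s a b hcard hab hcont hder
    have hs : s = ∅ := Finset.card_eq_zero.mp (le_antisymm hcard (Nat.zero_le _))
    exact mvt_le_aux0 hab hcont (fun t ht => hder t ht (by simp [hs]))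
  | succ N ih =>
    intro c φ s a b hcard hab hcont hder
    by_cases hex : ∃ t ∈ s, t ∈ Ioo a b
    · obtain ⟨t, hts, hta, htb⟩ := hex
      have hcard' : (s.erase t).card ≤ N := by
        have := Finset.card_erase_of_mem hts
        omega
      have h1 : φ t - φ a ≤ c * (t - a) := by
        apply ih c φ (s.erase t) a t hcard' (le_of_lt hta)
          (hcont.mono (Icc_subset_Icc le_rfl (le_of_lt htb)))
        intro r hr hrs
        apply hder r ⟨hr.1, lt_trans hr.2 htb⟩
        intro hrsmem
        exact hrs (Finset.mem_erase.mpr ⟨ne_of_lt hr.2, hrsmem⟩)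
      have h2 : φ b - φ t ≤ c * (b - t) := by
        apply ih c φ (s.erase t) t b hcard' (le_of_lt htb)
          (hcont.mono (Icc_subset_Icc (le_of_lt hta) le_rfl))
        intro r hr hrs
        apply hder r ⟨lt_trans hta hr.1, hr.2⟩
        intro hrsmem
        exact hrs (Finset.mem_erase.mpr ⟨ne_of_gt hr.1, hrsmem⟩)
      nlinarith
    · push_neg at hex
      exact mvt_le_aux0 hab hcont (fun t ht => hder t ht (fun hts => hex t hts ht))

/-- Global injectivity with a quantitative lower bound (Theorem 2.2). -/
theorem stmt16 (n : ℕ) (U : Set (EuclideanSpace ℝ (Fin n)))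
    (hU : Convex ℝ U) (hUo : IsOpen U)
    (f : EuclideanSpace ℝ (Fin n) → EuclideanSpace ℝ (Fin n))
    (f' : EuclideanSpace ℝ (Fin n) →
      (EuclideanSpace ℝ (Fin n) →L[ℝ] EuclideanSpace ℝ (Fin n)))
    (B : Set (EuclideanSpace ℝ (Fin n)))
    (hf : ContinuousOn f U)
    (hdiff : ∀ x ∈ U \ B, HasFDerivAt f (f' x) x)
    (hseg : ∀ x ∈ U, ∀ y ∈ U, (segment ℝ x y ∩ B).Finite)
    (δ : ℝ) (hδ : 0 < δ)
    (hco : ∀ A ∈ convexHull ℝ (f' '' (U \ B)),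
      ∀ v : EuclideanSpace ℝ (Fin n), ‖v‖ = 1 → δ ≤ ‖A v‖) :
    ∀ x ∈ U, ∀ x' ∈ U, δ * ‖x' - x‖ ≤ ‖f x' - f x‖ := by
  intro x hx x' hx'
  rcases eq_or_ne x' x with rfl | hne
  · simp
  set w : EuclideanSpace ℝ (Fin n) := x' - x with hw
  have hwne : w ≠ 0 := sub_ne_zero.mpr hne
  have hwnorm : (0:ℝ) < ‖w‖ := norm_pos_iff.mpr hwne
  -- the curve γ
  set γ : ℝ → EuclideanSpace ℝ (Fin n) := fun t => x + t • w with hγ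
  have hγU : ∀ t ∈ Icc (0:ℝ) 1, γ t ∈ U := by
    intro t ht
    have : γ t = (1 - t) • x + t • x' := by
      simp only [hγ, hw, smul_sub]
      module
    rw [this]
    exact hU hx hx' (by linarith [ht.2]) ht.1 (by linarith)
  have hγseg : ∀ t ∈ Icc (0:ℝ) 1, γ t ∈ segment ℝ x x' := by
    intro t ht
    have : γ t = (1 - t) • x + t • x' := by
      simp only [hγ, hw, smul_sub]; module
    rw [this]
    exact ⟨1 - t, t, by linarith [ht.2], ht.1, by ring, rfl⟩
  -- the set of "bad" times is finite
  have hγinj : Function.Injective γ := by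
    intro s t hst
    simp only [hγ, add_right_inj] at hst
    exact smul_left_injective ℝ hwne hst
  have hbad : (Icc (0:ℝ) 1 ∩ γ ⁻¹' B).Finite := by
    have h1 : (segment ℝ x x' ∩ B).Finite := hseg x hx x' hx'
    have : Icc (0:ℝ) 1 ∩ γ ⁻¹' B ⊆ γ ⁻¹' (segment ℝ x x' ∩ B) := by
      intro t ⟨ht1, ht2⟩
      exact ⟨hγseg t ht1, ht2⟩
    exact (h1.preimage (hγinj.injOn)).subset this
  -- key target set
  set T : Set (EuclideanSpace ℝ (Fin n)) := (fun z => f' z w) '' (U \ B) with hT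
  set K : Set (EuclideanSpace ℝ (Fin n)) := closure (convexHull ℝ T) with hK
  -- Claim 1: every element of K has norm ≥ δ‖w‖
  have hKnorm : ∀ y ∈ K, δ * ‖w‖ ≤ ‖y‖ := by
    have hhull : ∀ y ∈ convexHull ℝ T, δ * ‖w‖ ≤ ‖y‖ := by
      have himg : convexHull ℝ T =
          (ContinuousLinearMap.apply ℝ (EuclideanSpace ℝ (Fin n)) w : ((EuclideanSpace ℝ (Fin n)) →L[ℝ] (EuclideanSpace ℝ (Fin n))) →ₗ[ℝ] (EuclideanSpace ℝ (Fin n))) '' (convexHull ℝ (f' '' (U \ B))) := by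
        rw [LinearMap.image_convexHull, hT, ← Set.image_comp]
        rfl
      intro y hy
      rw [himg] at hy
      obtain ⟨A, hA, rfl⟩ := hy
      have := hco A hA (‖w‖⁻¹ • w) (by
        rw [norm_smul, norm_inv, norm_norm, inv_mul_cancel₀ (ne_of_gt hwnorm)])
      have hAw : A (‖w‖⁻¹ • w) = ‖w‖⁻¹ • A w := A.map_smul _ _
      rw [hAw, norm_smul, norm_inv, norm_norm] at this
      calc δ * ‖w‖ ≤ (‖w‖⁻¹ * ‖A w‖) * ‖w‖ :=
            mul_le_mul_of_nonneg_right this (le_of_lt hwnorm)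
      _ = ‖A w‖ := by field_simp
    intro y hy
    have hclosed : IsClosed {y : EuclideanSpace ℝ (Fin n) | δ * ‖w‖ ≤ ‖y‖} :=
      isClosed_le continuous_const continuous_norm
    exact hclosed.closure_subset_iff.mpr hhull hy
  -- Claim 2: f x' - f x ∈ K
  have hmem : f x' - f x ∈ K := by
    by_contra hv
    obtain ⟨L, u, hLK, hLu⟩ :=
      geometric_hahn_banach_closed_point (convex_convexHull ℝ T).closure isClosed_closure hv
    -- φ t = L (f (γ t))
    set φ : ℝ → ℝ := fun t => L (f (γ t)) with hφ
    have hγcont : Continuous γ := by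
      apply continuous_const.add (continuous_id.smul continuous_const)
    have hφcont : ContinuousOn φ (Icc 0 1) := by
      apply L.continuous.comp_continuousOn
      exact (hf.comp hγcont.continuousOn (fun t ht => hγU t ht))
    have hder : ∀ t ∈ Ioo (0:ℝ) 1, t ∉ hbad.toFinset →
        ∃ d, d ≤ u ∧ HasDerivAt φ d t := by
      intro t ht hts
      have htIcc : t ∈ Icc (0:ℝ) 1 := ⟨le_of_lt ht.1, le_of_lt ht.2⟩
      have hγtB : γ t ∉ B := by
        intro hmem'
        exact hts (hbad.mem_toFinset.mpr ⟨htIcc, hmem'⟩)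
      have hγtU : γ t ∈ U := hγU t htIcc
      have hfd : HasFDerivAt f (f' (γ t)) (γ t) := hdiff _ ⟨hγtU, hγtB⟩
      have hγd : HasDerivAt γ w t := by
        simp only [hγ]
        simpa using ((hasDerivAt_id t).smul_const w).const_add x
      have hcomp : HasDerivAt (f ∘ γ) (f' (γ t) w) t := hfd.comp_hasDerivAt t hγd
      refine ⟨L (f' (γ t) w), le_of_lt ?_, ?_⟩
      · apply hLK
        apply subset_closure
        exact subset_convexHull ℝ T ⟨γ t, ⟨hγtU, hγtB⟩, rfl⟩
      · exact L.hasFDerivAt.comp_hasDerivAt t hcomp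
    have := mvt_le_aux hbad.toFinset.card u φ hbad.toFinset 0 1 le_rfl zero_le_one
      hφcont hder
    have hφ1 : φ 1 = L (f x') := by
      simp only [hφ, hγ, hw]
      norm_num
    have hφ0 : φ 0 = L (f x) := by
      simp only [hφ, hγ]
      norm_num
    rw [hφ1, hφ0, ← L.map_sub] at this
    simp only [mul_one, sub_zero] at this
    linarith
  exact hKnorm _ hmem
end

section
/- Quasi-homogeneous inverse formula: let w₁,…,wₙ, d, d' be reals with (d+1)(d'+1) = 1, and let P : ℝⁿ \ {0} → (0,∞) satisfy P(t^{w₁}x₁,…,t^{wₙ}xₙ) = t^d P(x) for all t > 0 and x ≠ 0. Define Q : ℝⁿ \ {0} → (0,∞) by Q(x) = P(x)^{-(d'+1)}, and define F_P(x) = (P(x)^{w₁}x₁, …, P(x)^{wₙ}xₙ) and F_Q analogously. Then F_Q ∘ F_P = id on ℝⁿ \ {0}; in particular if P is continuous then F_P is a homeomorphism of ℝⁿ \ {0} with inverse F_Q. -/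
/-- Quasi-homogeneous inverse formula: F_Q ∘ F_P = id on ℝⁿ \ {0}. -/
theorem stmt18 (n : ℕ) (w : Fin n → ℝ) (d d' : ℝ)
    (hd : (d + 1) * (d' + 1) = 1)
    (P Q : (Fin n → ℝ) → ℝ)
    (hP : ∀ x : Fin n → ℝ, x ≠ 0 → 0 < P x)
    (hhom : ∀ t : ℝ, 0 < t → ∀ x : Fin n → ℝ, x ≠ 0 →
      P (fun i => t ^ (w i) * x i) = t ^ d * P x)
    (hQ : ∀ x : Fin n → ℝ, Q x = (P x) ^ (-(d' + 1)))
    (FP FQ : (Fin n → ℝ) → (Fin n → ℝ))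
    (hFP : ∀ x i, FP x i = (P x) ^ (w i) * x i)
    (hFQ : ∀ y i, FQ y i = (Q y) ^ (w i) * y i) :
    ∀ x : Fin n → ℝ, x ≠ 0 → FQ (FP x) = x := by
  intro x hx
  have ht : 0 < P x := hP x hx
  have hFPx : FP x = fun i => (P x) ^ (w i) * x i := funext fun i => hFP x i
  have hPFP : P (FP x) = (P x) ^ (d + 1) := by
    rw [hFPx, hhom (P x) ht x hx, Real.rpow_add ht, Real.rpow_one]
  have hQFP : Q (FP x) = (P x) ^ (-(1 : ℝ)) := by
    rw [hQ, hPFP, ← Real.rpow_mul ht.le, mul_neg, hd]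
  funext i
  rw [hFQ, hQFP, hFP, ← mul_assoc, ← Real.rpow_mul ht.le, neg_one_mul,
    ← Real.rpow_add ht, neg_add_cancel, Real.rpow_zero, one_mul]
end
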